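/- The residue analogue of the dual action: for a partition $\lambda = (m_1,\dots,m_r|n_1,\dots,n_r)$ in Frobenius notation with $n_r \ge 1$, $-\operatorname{res}_{z=\infty} s_\lambda(\mathbf{q} + [z^{-1}])\, e^{-\sum_{n\ge 1} q_n z^n}\, \frac{dz}{z} = (-1)^r\, s_{(m_1+1,\dots,m_r+1 | n_1-1,\dots,n_r-1)}(\mathbf{q})$; if $n_r = 0$, the left-hand side vanishes. -/

import Mathlib

open PowerSeries

noncomputable section

abbrev MvP := MvPolynomial ℕ ℂ

/-- Exponential of a power series (with zero constant term) over `MvP`,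
defined coefficientwise: `coeff n (exp f) = ∑_{m ≤ n} coeff n (f^m) / m!`. -/
def psExp (f : PowerSeries MvP) : PowerSeries MvP :=
  PowerSeries.mk fun n => ∑ m ∈ Finset.range (n + 1),
    MvPolynomial.C ((m.factorial : ℂ)⁻¹) * PowerSeries.coeff (R := MvP) n (f ^ m)

/-- The series `∑_{n ≥ 1} q_n z^n`, where `q_n` is the variable `X n`. -/
def genQ : PowerSeries MvP := PowerSeries.mk fun n => if n = 0 then 0 else MvPolynomial.X n

/-- The complete homogeneous polynomials: `∑ h_k z^k = exp (∑_{n≥1} q_n z^n)`. -/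
def hh (k : ℕ) : MvP := PowerSeries.coeff (R := MvP) k (psExp genQ)

/-- `h_k` extended to integer indices by `0` for negative `k`. -/
def hZ (k : ℤ) : MvP := if k < 0 then 0 else hh k.toNat

/-- The determinant `det (h_{k_i - i + j})`. -/
def detM (ks : List ℤ) : MvP :=
  Matrix.det (Matrix.of fun i j : Fin ks.length => hZ (ks.get i - ((i : ℕ) : ℤ) + ((j : ℕ) : ℤ)))

/-- The Schur polynomial via the Jacobi–Trudi formula. -/
def schur (l : List ℕ) : MvP := detM (l.map (fun a => (a : ℤ)))

/-- A list of natural numbers is a partition: weakly decreasing with positive parts. -/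
def IsPartition (l : List ℕ) : Prop := l.Chain' (· ≥ ·) ∧ ∀ p ∈ l, 0 < p

/-- The substitution `q_n ↦ q_n - 1/(n zⁿ)`, with `PowerSeries.X` playing the role of `z⁻¹`. -/
def shiftNeg : MvP →+* PowerSeries MvP :=
  MvPolynomial.eval₂Hom ((PowerSeries.C (R := MvP)).comp MvPolynomial.C)
    fun n => PowerSeries.C (R := MvP) (MvPolynomial.X n)
      - PowerSeries.C (R := MvP) (MvPolynomial.C ((n : ℂ)⁻¹)) * PowerSeries.X ^ n

/-- The substitution `q_n ↦ q_n + 1/(n zⁿ)`, with `PowerSeries.X` playing the role of `z⁻¹`. -/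
def shiftPos : MvP →+* PowerSeries MvP :=
  MvPolynomial.eval₂Hom ((PowerSeries.C (R := MvP)).comp MvPolynomial.C)
    fun n => PowerSeries.C (R := MvP) (MvPolynomial.X n)
      + PowerSeries.C (R := MvP) (MvPolynomial.C ((n : ℂ)⁻¹)) * PowerSeries.X ^ n

/-- The partition with Frobenius coordinates `(m₁,…,m_r | n₁,…,n_r)`, as a list of parts. -/
def frobToList (r : ℕ) (m n : Fin r → ℕ) : List ℕ :=
  List.ofFn fun i : Fin (if h : 0 < r then n ⟨0, h⟩ + 1 else 0) =>
    if hi : (i : ℕ) < r then m ⟨(i : ℕ), hi⟩ + (i : ℕ) + 1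
    else ((Finset.univ : Finset (Fin r)).filter fun j => (i : ℕ) + 1 ≤ n j + (j : ℕ) + 1).card

/-- The hook partition `(m | n) = (m+1, 1ⁿ)`. -/
def hook (m n : ℕ) : List ℕ := (m + 1) :: List.replicate n 1

/-- The Frobenius rank (number of diagonal boxes) of a partition. -/
def frobR (l : List ℕ) : ℕ := ((Finset.range l.length).filter fun i => i + 1 ≤ l.getD i 0).card

/-- The Frobenius arm coordinate `m_i = λ_i - i` (0-based `i`). -/
def frobM (l : List ℕ) (i : ℕ) : ℕ := l.getD i 0 - (i + 1)

/-- The Frobenius leg coordinate `n_i = λ'_i - i` (0-based `i`). -/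
def frobN (l : List ℕ) (i : ℕ) : ℕ :=
  ((Finset.range l.length).filter fun j => i + 1 ≤ l.getD j 0).card - (i + 1)

/-- The Plücker coordinate `π_λ = (-1)^{∑ n_i} det (A_{m_i, n_j})`. -/
def piA (A : ℕ → ℕ → ℂ) (l : List ℕ) : ℂ :=
  (-1 : ℂ) ^ (∑ i ∈ Finset.range (frobR l), frobN l i) *
    Matrix.det (Matrix.of fun i j : Fin (frobR l) => A (frobM l i) (frobN l j))

/-- `h_n(-q)`, the coefficients of `e^{-∑ q_n zⁿ}`. -/
def hNeg (k : ℕ) : MvP :=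
  MvPolynomial.eval₂ MvPolynomial.C (fun n => -MvPolynomial.X n) (hh k)


set_option linter.unusedSectionVars false
set_option linter.unusedVariables false
set_option maxHeartbeats 1000000

open Finset

section GeneralExp

variable {R : Type*} [CommRing R] [Algebra ℚ R]

/-- general exponential -/
def pE (f : PowerSeries R) : PowerSeries R :=
  PowerSeries.mk fun n => ∑ m ∈ Finset.range (n + 1),
    algebraMap ℚ R ((m.factorial : ℚ)⁻¹) * PowerSeries.coeff (R := R) n (f ^ m)

theorem coeff_pow_eq_zero {f : PowerSeries R} (hf : constantCoeff (R := R) f = 0)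
    {n m : ℕ} (h : n < m) : coeff (R := R) n (f ^ m) = 0 := by
  have : (X : PowerSeries R) ^ m ∣ f ^ m := pow_dvd_pow_of_dvd (X_dvd_iff.mpr hf) m
  exact X_pow_dvd_iff.mp this n h

theorem coeff_pE (f : PowerSeries R) (n : ℕ) :
    coeff (R := R) n (pE f) = ∑ m ∈ Finset.range (n + 1),
      algebraMap ℚ R ((m.factorial : ℚ)⁻¹) * PowerSeries.coeff (R := R) n (f ^ m) := by
  simp [pE]

theorem coeff_pE_ext {f : PowerSeries R} (hf : constantCoeff (R := R) f = 0) {n N : ℕ} (hN : n ≤ N) :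
    coeff (R := R) n (pE f) = ∑ m ∈ Finset.range (N + 1),
      algebraMap ℚ R ((m.factorial : ℚ)⁻¹) * PowerSeries.coeff (R := R) n (f ^ m) := by
  rw [coeff_pE]
  refine Finset.sum_subset (Finset.range_subset_range.mpr (by omega)) ?_
  intro m _ hm
  simp only [Finset.mem_range, not_lt] at hm
  rw [coeff_pow_eq_zero hf (by omega), mul_zero]

theorem coeff_zero_pE (f : PowerSeries R) : coeff (R := R) 0 (pE f) = 1 := by
  simp [pE]

theorem pE_deriv {f : PowerSeries R} (hf : constantCoeff (R := R) f = 0) :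
    d⁄dX R (pE f) = d⁄dX R f * pE f := by
  ext n
  rw [coeff_derivative, coeff_pE, Finset.sum_mul, Finset.sum_range_succ']
  have hzero : algebraMap ℚ R ((Nat.factorial 0 : ℚ))⁻¹ * (coeff (R := R) (n+1)) (f ^ 0) * (n+1) = 0 := by
    simp [PowerSeries.coeff_one]
  rw [hzero, add_zero]
  have hterm : ∀ m : ℕ, algebraMap ℚ R ((Nat.factorial (m+1) : ℚ))⁻¹ *
      (coeff (R := R) (n+1)) (f ^ (m+1)) * (n+1) =
      algebraMap ℚ R ((Nat.factorial m : ℚ))⁻¹ * coeff (R := R) n (d⁄dX R f * f ^ m) := by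
    intro m
    have hd : (coeff (R := R) (n+1)) (f ^ (m+1)) * ((n:R)+1) = coeff (R := R) n (d⁄dX R (f ^ (m+1))) := by
      rw [coeff_derivative]
    rw [mul_assoc, hd]
    have hl : d⁄dX R (f ^ (m+1)) = (m+1) • (f ^ m * d⁄dX R f) := by
      have := Derivation.leibniz_pow (d⁄dX R) (a := f) (m+1)
      simpa [smul_smul, Nat.succ_sub_one] using this
    rw [hl, map_nsmul, nsmul_eq_mul, mul_comm (f ^ m)]
    rw [← mul_assoc, ← map_natCast (algebraMap ℚ R) (m+1), ← map_mul]
    congr 2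
    rw [Nat.factorial_succ]
    have h1 : ((m:ℚ)+1) ≠ 0 := by positivity
    have h2 : ((Nat.factorial m : ℚ)) ≠ 0 := by exact_mod_cast Nat.factorial_ne_zero m
    push_cast
    field_simp
  simp only [hterm]
  have hrhs : coeff (R := R) n (d⁄dX R f * pE f) = ∑ m ∈ Finset.range (n+1),
      algebraMap ℚ R ((Nat.factorial m : ℚ))⁻¹ * coeff (R := R) n (d⁄dX R f * f ^ m) := by
    rw [PowerSeries.coeff_mul]
    rw [Finset.sum_congr rfl (fun p hp => by
      rw [coeff_pE_ext hf (show p.2 ≤ n by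
        have := Finset.HasAntidiagonal.mem_antidiagonal.mp hp; omega)] )]
    simp only [Finset.mul_sum]
    rw [Finset.sum_comm]
    refine Finset.sum_congr rfl fun m _ => ?_
    rw [PowerSeries.coeff_mul, Finset.mul_sum]
    refine Finset.sum_congr rfl fun p _ => by ring
  rw [hrhs]

theorem ode_unique {h y₁ y₂ : PowerSeries R}
    (h1 : d⁄dX R y₁ = h * y₁) (h2 : d⁄dX R y₂ = h * y₂)
    (h0 : coeff (R := R) 0 y₁ = coeff (R := R) 0 y₂) : y₁ = y₂ := by
  ext n
  induction n using Nat.strong_induction_on with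
  | _ n ih =>
    match n with
    | 0 => exact h0
    | (k+1) =>
      have e1 : coeff (R := R) (k+1) y₁ * ((k:R)+1) = coeff (R := R) (k+1) y₂ * ((k:R)+1) := by
        rw [show (coeff (R := R) (k+1) y₁) * ((k:R)+1) = coeff (R := R) k (d⁄dX R y₁) from
          (coeff_derivative y₁ k).symm,
          show (coeff (R := R) (k+1) y₂) * ((k:R)+1) = coeff (R := R) k (d⁄dX R y₂) from
          (coeff_derivative y₂ k).symm, h1, h2, PowerSeries.coeff_mul, PowerSeries.coeff_mul]
        refine Finset.sum_congr rfl fun p hp => ?_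
        have hmem := Finset.HasAntidiagonal.mem_antidiagonal.mp hp
        rw [ih p.2 (by omega)]
      have hu : IsUnit ((k:R)+1) := by
        have : ((k:R)+1) = algebraMap ℚ R ((k:ℚ)+1) := by push_cast; simp
        rw [this]
        exact (IsUnit.map (algebraMap ℚ R) (isUnit_iff_ne_zero.mpr (by positivity)))
      exact hu.mul_right_cancel e1

theorem pE_mul {f g : PowerSeries R} (hf : constantCoeff (R := R) f = 0)
    (hg : constantCoeff (R := R) g = 0) : pE (f + g) = pE f * pE g := by
  refine ode_unique (h := d⁄dX R f + d⁄dX R g) ?_ ?_ ?_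
  · rw [pE_deriv (by simp [hf, hg]), map_add]
  · rw [Derivation.leibniz, pE_deriv hf, pE_deriv hg, smul_eq_mul, smul_eq_mul]
    ring
  · rw [coeff_zero_pE]
    rw [show (coeff (R := R) 0) (pE f * pE g) = coeff (R := R) 0 (pE f) * coeff (R := R) 0 (pE g) by
      simp [PowerSeries.coeff_zero_eq_constantCoeff, map_mul]]
    rw [coeff_zero_pE, coeff_zero_pE, mul_one]

theorem pE_zero : pE (0 : PowerSeries R) = 1 := by
  ext n
  rw [coeff_pE]
  match n with
  | 0 => simp
  | (k+1) =>
    rw [Finset.sum_range_succ']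
    simp [zero_pow, PowerSeries.coeff_one]

theorem pE_map {R' : Type*} [CommRing R'] [Algebra ℚ R'] (φ : R →+* R')
    (hφ : ∀ q : ℚ, φ (algebraMap ℚ R q) = algebraMap ℚ R' q) (f : PowerSeries R) :
    PowerSeries.map φ (pE f) = pE (PowerSeries.map φ f) := by
  ext n
  rw [PowerSeries.coeff_map, coeff_pE, coeff_pE, map_sum]
  refine Finset.sum_congr rfl fun m _ => ?_
  rw [map_mul, hφ, ← map_pow, PowerSeries.coeff_map]

theorem pE_geom (r : R) :
    pE (PowerSeries.mk fun k => if k = 0 then 0 else algebraMap ℚ R ((k:ℚ)⁻¹) * r ^ k) =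
      PowerSeries.mk fun t => r ^ t := by
  set ℓ : PowerSeries R := PowerSeries.mk fun k =>
    if k = 0 then 0 else algebraMap ℚ R ((k:ℚ)⁻¹) * r ^ k with hℓ
  have hconst : constantCoeff (R := R) ℓ = 0 := by
    simp [hℓ, ← PowerSeries.coeff_zero_eq_constantCoeff]
  have hd : d⁄dX R ℓ = PowerSeries.mk fun a => r ^ (a+1) := by
    ext a
    rw [coeff_derivative]
    simp only [hℓ, PowerSeries.coeff_mk, if_neg (Nat.succ_ne_zero a)]
    rw [mul_comm, ← mul_assoc, show ((a:R)+1) = algebraMap ℚ R ((a:ℚ)+1) by push_cast; simp,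
      ← map_mul]
    rw [show ((a:ℚ)+1) * ((a + 1 : ℕ) : ℚ)⁻¹ = 1 by push_cast; field_simp]
    simp
  refine ode_unique (h := PowerSeries.mk fun a => r ^ (a+1)) ?_ ?_ ?_
  · rw [pE_deriv hconst, hd]
  · ext t
    rw [coeff_derivative, PowerSeries.coeff_mul]
    simp only [PowerSeries.coeff_mk]
    rw [Finset.sum_congr rfl (fun p hp => by
      have := Finset.HasAntidiagonal.mem_antidiagonal.mp hp
      rw [← pow_add, show p.1 + 1 + p.2 = t + 1 by omega])]
    rw [Finset.sum_const, Finset.Nat.card_antidiagonal]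
    rw [nsmul_eq_mul]
    push_cast
    ring
  · rw [coeff_zero_pE]
    simp

end GeneralExp



theorem algebraMap_MvP (q : ℚ) : algebraMap ℚ MvP q = MvPolynomial.C (q : ℂ) := by
  rw [MvPolynomial.algebraMap_apply, eq_ratCast (algebraMap ℚ ℂ) q]

theorem psExp_eq_pE (f : PowerSeries MvP) : psExp f = pE f := by
  refine PowerSeries.ext fun n => ?_
  rw [psExp, PowerSeries.coeff_mk, coeff_pE]
  refine Finset.sum_congr rfl fun m _ => ?_
  rw [algebraMap_MvP]
  push_cast
  rfl

theorem constantCoeff_genQ : constantCoeff (R := MvP) genQ = 0 := by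
  rw [← PowerSeries.coeff_zero_eq_constantCoeff, genQ, PowerSeries.coeff_mk, if_pos rfl]

def nu : MvP →+* MvP := MvPolynomial.eval₂Hom MvPolynomial.C (fun i => -MvPolynomial.X i)

theorem hNeg_eq (k : ℕ) : hNeg k = coeff (R := MvP) k (pE (-genQ)) := by
  have h1 : hNeg k = nu (hh k) := rfl
  have h2 : PowerSeries.map nu genQ = -genQ := by
    refine PowerSeries.ext fun t => ?_
    rw [PowerSeries.coeff_map, map_neg, genQ, PowerSeries.coeff_mk]
    split_ifs <;> simp [nu]
  rw [h1, hh, psExp_eq_pE, ← PowerSeries.coeff_map,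
    pE_map nu (fun q => by rw [algebraMap_MvP]; exact MvPolynomial.eval₂_C _ _ _), h2]

theorem convZ (M : ℤ) (K : ℕ) (hMK : M ≤ K) :
    ∑ k ∈ Finset.range (K+1), hNeg k * hZ (M - k) = if M = 0 then 1 else 0 := by
  rcases lt_or_ge M 0 with hM | hM
  · rw [if_neg (by omega)]
    refine Finset.sum_eq_zero fun k _ => ?_
    rw [hZ, if_pos (by omega), mul_zero]
  · lift M to ℕ using hM with N
    have key : ∀ k ∈ Finset.range (K+1), k ∉ Finset.range (N+1) →
        hNeg k * hZ ((N:ℤ) - k) = 0 := by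
      intro k _ hk
      simp only [Finset.mem_range, not_lt] at hk
      rw [hZ, if_pos (by omega), mul_zero]
    rw [← Finset.sum_subset (Finset.range_subset_range.mpr (by omega)) key]
    have hstep : ∀ k ∈ Finset.range (N+1), hNeg k * hZ ((N:ℤ) - k) =
        coeff (R := MvP) k (pE (-genQ)) * coeff (R := MvP) (N - k) (pE genQ) := by
      intro k hk
      simp only [Finset.mem_range] at hk
      rw [hNeg_eq, hZ, if_neg (by omega), show ((N:ℤ) - k).toNat = N - k by omega]
      rw [hh, psExp_eq_pE]
    rw [Finset.sum_congr rfl hstep]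
    rw [← Finset.Nat.sum_antidiagonal_eq_sum_range_succ_mk
      (fun p => coeff (R := MvP) p.1 (pE (-genQ)) * coeff (R := MvP) p.2 (pE genQ))]
    rw [← PowerSeries.coeff_mul, ← pE_mul (by simp [constantCoeff_genQ]) constantCoeff_genQ]
    rw [neg_add_cancel, pE_zero, PowerSeries.coeff_one]
    simp

theorem shiftPos_hh (k : ℕ) : shiftPos (hh k) = PowerSeries.mk fun t => hZ ((k:ℤ) - t) := by
  classical
  set S := PowerSeries MvP
  set Ch : MvP →+* S := PowerSeries.C (R := MvP) with hCh
  have hφ1 : ∀ q : ℚ, shiftPos (algebraMap ℚ MvP q) = algebraMap ℚ S q := by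
    intro q
    rw [algebraMap_MvP, PowerSeries.algebraMap_apply, algebraMap_MvP]
    simp [shiftPos]
  have hφ2 : ∀ q : ℚ, Ch (algebraMap ℚ MvP q) = algebraMap ℚ S q := by
    intro q
    rw [PowerSeries.algebraMap_apply]
  set Dser : PowerSeries S := PowerSeries.mk fun t =>
    if t = 0 then 0 else algebraMap ℚ S ((t:ℚ)⁻¹) * (PowerSeries.X : S) ^ t with hDser
  have hdec : PowerSeries.map shiftPos genQ = PowerSeries.map Ch genQ + Dser := by
    ext t
    rw [PowerSeries.coeff_map, map_add, PowerSeries.coeff_map, hDser, genQ]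
    simp only [PowerSeries.coeff_mk]
    split_ifs with ht
    · simp
    · rw [show shiftPos (MvPolynomial.X t) = PowerSeries.C (R := MvP) (MvPolynomial.X t)
          + PowerSeries.C (R := MvP) (MvPolynomial.C ((t : ℂ)⁻¹)) * PowerSeries.X ^ t from by
        simp [shiftPos]]
      congr 1
      rw [PowerSeries.algebraMap_apply, algebraMap_MvP]
      push_cast
      rfl
  have hmain : shiftPos (hh k) = coeff (R := S) k (PowerSeries.map Ch (pE genQ) *
      PowerSeries.mk fun t => (PowerSeries.X : S) ^ t) := by
    rw [hh, psExp_eq_pE, ← PowerSeries.coeff_map, pE_map shiftPos hφ1, hdec,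
      pE_mul (by rw [← PowerSeries.coeff_zero_eq_constantCoeff, PowerSeries.coeff_map,
          PowerSeries.coeff_zero_eq_constantCoeff, constantCoeff_genQ, map_zero])
        (by rw [← PowerSeries.coeff_zero_eq_constantCoeff, hDser, PowerSeries.coeff_mk]; simp),
      pE_map Ch hφ2, hDser, pE_geom]
  rw [hmain]
  refine PowerSeries.ext fun t => ?_
  rw [PowerSeries.coeff_mk, PowerSeries.coeff_mul]
  have hterm : ∀ p ∈ Finset.HasAntidiagonal.antidiagonal k,
      coeff (R := MvP) t ((coeff (R := S) p.1 (PowerSeries.map Ch (pE genQ))) *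
        (coeff (R := S) p.2 (PowerSeries.mk fun u => (PowerSeries.X : S) ^ u))) =
      hh p.1 * (if t = p.2 then 1 else 0) := by
    intro p _
    rw [PowerSeries.coeff_map, PowerSeries.coeff_mk, hCh]
    rw [PowerSeries.coeff_C_mul, PowerSeries.coeff_X_pow]
    rw [hh, psExp_eq_pE]
  rw [map_sum, Finset.sum_congr rfl hterm,
    Finset.Nat.sum_antidiagonal_eq_sum_range_succ_mk (fun p => hh p.1 * (if t = p.2 then 1 else 0))]
  rcases le_or_gt t k with htk | htk
  · rw [Finset.sum_eq_single (k - t)]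
    · rw [if_pos (by omega), mul_one, hZ, if_neg (by omega)]
      congr 1
      omega
    · intro j hj hne
      simp only [Finset.mem_range] at hj
      rw [if_neg (by omega), mul_zero]
    · intro h
      exact absurd (Finset.mem_range.mpr (by omega)) h
  · rw [hZ, if_pos (by omega)]
    refine Finset.sum_eq_zero fun j hj => ?_
    simp only [Finset.mem_range] at hj
    rw [if_neg (by omega), mul_zero]

theorem shiftPos_hZ (b : ℤ) : shiftPos (hZ b) = PowerSeries.mk fun t => hZ (b - t) := by
  rcases lt_or_ge b 0 with hb | hb
  · rw [hZ, if_pos hb, map_zero]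
    refine (PowerSeries.ext fun t => ?_).symm
    rw [PowerSeries.coeff_mk, hZ, if_pos (by omega), map_zero]
  · rw [hZ, if_neg (by omega), shiftPos_hh]
    refine PowerSeries.ext fun t => ?_
    rw [PowerSeries.coeff_mk, PowerSeries.coeff_mk, show ((b.toNat : ℤ)) - t = b - t by omega]


theorem hZ_neg {b : ℤ} (hb : b < 0) : hZ b = 0 := if_pos hb

theorem det_congr_size {M M' : ℕ} (h : M = M') (f : Fin M → Fin M → MvP)
    (g : Fin M' → Fin M' → MvP)
    (hfg : ∀ i j, f i j = g (Fin.cast h i) (Fin.cast h j)) :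
    Matrix.det (Matrix.of f) = Matrix.det (Matrix.of g) := by
  subst h
  have : f = g := funext fun i => funext fun j => by simpa using hfg i j
  rw [this]

theorem main_calc (L : ℕ) (b : Fin (L+1) → ℤ) :
    (∑ᶠ k : ℕ, hNeg k * PowerSeries.coeff (R := MvP) k
        (shiftPos (Matrix.det (Matrix.of fun i j : Fin (L+1) => hZ (b i + (j:ℕ)))))) =
    ∑ i : Fin (L+1), (-1 : MvP)^(i:ℕ) * (if b i = 0 then 1 else 0) *
      Matrix.det (Matrix.of fun i' j' : Fin L => hZ (b (i.succAbove i') + ((j':ℕ)+1))) := by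
  classical
  set Ch : MvP →+* PowerSeries MvP := PowerSeries.C (R := MvP) with hCh
  set A' : Matrix (Fin (L+1)) (Fin (L+1)) (PowerSeries MvP) := Matrix.of fun i j =>
    if j = 0 then (PowerSeries.mk fun t => hZ (b i - t)) else Ch (hZ (b i + (j:ℕ))) with hA'
  set U : Matrix (Fin (L+1)) (Fin (L+1)) (PowerSeries MvP) := Matrix.of fun j k =>
    if (j:ℕ) ≤ (k:ℕ) then (PowerSeries.X : PowerSeries MvP)^((k:ℕ)-(j:ℕ)) else 0 with hU
  -- step 1 : the matrix factorization
  have hfact : (Matrix.of fun i j : Fin (L+1) => hZ (b i + (j:ℕ))).map shiftPos = A' * U := by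
    refine Matrix.ext fun i k => ?_
    simp only [Matrix.map_apply, Matrix.mul_apply, Matrix.of_apply]
    rw [shiftPos_hZ]
    refine (PowerSeries.ext fun t => ?_).symm
    rw [map_sum]
    have hsplit : ∀ j : Fin (L+1), (PowerSeries.coeff (R := MvP) t) (A' i j * U j k) =
        if j = 0 then (if (k:ℕ) ≤ t then hZ (b i - (t - (k:ℕ))) else 0)
        else (if (j:ℕ) ≤ (k:ℕ) ∧ t = (k:ℕ) - (j:ℕ) then hZ (b i + (j:ℕ)) else 0) := by
      intro j
      rcases eq_or_ne j 0 with hj | hj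
      · subst hj
        rw [if_pos rfl]
        simp only [hA', hU, Matrix.of_apply, if_pos rfl, Fin.val_zero, Nat.zero_le, if_true,
          Nat.sub_zero]
        rw [PowerSeries.coeff_mul_X_pow', PowerSeries.coeff_mk]
        split_ifs with h
        · congr 1
          omega
        · rfl
      · rw [if_neg hj]
        simp only [hA', hU, Matrix.of_apply, if_neg hj]
        split_ifs with h1 h2 h3
        · rw [PowerSeries.coeff_C_mul, PowerSeries.coeff_X_pow, if_pos h2.2, mul_one]
        · rw [PowerSeries.coeff_C_mul, PowerSeries.coeff_X_pow,
            if_neg (by intro hc; exact h2 ⟨h1, hc⟩), mul_zero]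
        · exact absurd h3.1 h1
        · rw [mul_zero, map_zero]
    rw [Finset.sum_congr rfl (fun j _ => hsplit j), Fin.sum_univ_succ, PowerSeries.coeff_mk]
    rw [if_pos rfl]
    rcases le_or_gt (k:ℕ) t with hkt | hkt
    · rw [if_pos hkt]
      rw [Finset.sum_eq_zero (fun j _ => by
        rw [if_neg (Fin.succ_ne_zero j), if_neg (by
          simp only [Fin.val_succ]
          rintro ⟨h1, h2⟩
          omega)])]
      rw [add_zero]
      congr 1
      omega
    · rw [if_neg (by omega)]
      rw [zero_add]
      have hlt : (k:ℕ) - t - 1 < L := by omega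
      rw [Finset.sum_eq_single (⟨(k:ℕ) - t - 1, hlt⟩ : Fin L)]
      · rw [if_neg (Fin.succ_ne_zero _), if_pos (by simp only [Fin.val_succ]; omega)]
        congr 1
        simp only [Fin.val_succ]
        omega
      · intro j _ hne
        rw [if_neg (Fin.succ_ne_zero _), if_neg (by
          simp only [Fin.val_succ]
          rintro ⟨h1, h2⟩
          apply hne
          apply Fin.ext
          simp only []
          omega)]
      · intro h
        exact absurd (Finset.mem_univ _) h
  have hdetU : U.det = 1 := by
    rw [Matrix.det_of_upperTriangular (by
      intro i j hij
      simp only [hU, Matrix.of_apply]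
      rw [if_neg (by simpa using Nat.not_le.mpr hij)])]
    refine Finset.prod_eq_one fun i _ => by
      simp [hU]
  have hdet : shiftPos (Matrix.det (Matrix.of fun i j : Fin (L+1) => hZ (b i + (j:ℕ))))
      = A'.det := by
    rw [RingHom.map_det, RingHom.mapMatrix_apply, hfact, Matrix.det_mul, hdetU, mul_one]
  -- step 3: expansion along column 0
  have hcoeff : ∀ k : ℕ, PowerSeries.coeff (R := MvP) k (A'.det) =
      ∑ i : Fin (L+1), (-1 : MvP)^(i:ℕ) * hZ (b i - k) *
        Matrix.det (Matrix.of fun i' j' : Fin L => hZ (b (i.succAbove i') + ((j':ℕ)+1))) := by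
    intro k
    rw [Matrix.det_succ_column_zero, map_sum]
    refine Finset.sum_congr rfl fun i _ => ?_
    have hsub : (A'.submatrix i.succAbove Fin.succ) =
        Ch.mapMatrix (Matrix.of fun i' j' : Fin L => hZ (b (i.succAbove i') + ((j':ℕ)+1))) := by
      refine Matrix.ext fun i' j' => ?_
      rw [RingHom.mapMatrix_apply]
      simp only [Matrix.submatrix_apply, hA', Matrix.of_apply, Matrix.map_apply,
        if_neg (Fin.succ_ne_zero j'), Fin.val_succ]
      norm_cast
    rw [hsub, ← RingHom.map_det]
    have hA0 : A' i 0 = PowerSeries.mk fun t => hZ (b i - t) := by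
      simp [hA']
    rw [hA0]
    rw [show ((-1 : PowerSeries MvP))^(i:ℕ) * (PowerSeries.mk fun t => hZ (b i - t)) *
        Ch (Matrix.det (Matrix.of fun i' j' : Fin L => hZ (b (i.succAbove i') + ((j':ℕ)+1)))) =
        Ch ((-1)^(i:ℕ) *
          Matrix.det (Matrix.of fun i' j' : Fin L => hZ (b (i.succAbove i') + ((j':ℕ)+1)))) *
          (PowerSeries.mk fun t => hZ (b i - t)) by
      rw [map_mul, map_pow, map_neg, map_one]
      ring]
    rw [PowerSeries.coeff_C_mul, PowerSeries.coeff_mk]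
    ring
  -- step 4/5: finsum to finite sum, swap
  set K : ℕ := Finset.univ.sup (fun i : Fin (L+1) => (b i).toNat) with hK
  have hbK : ∀ i : Fin (L+1), b i ≤ K := by
    intro i
    have h2 : (b i).toNat ≤ K :=
      Finset.le_sup (f := fun i : Fin (L+1) => (b i).toNat) (Finset.mem_univ i)
    omega
  have hzero : ∀ k : ℕ, K < k → hNeg k * PowerSeries.coeff (R := MvP) k
      (shiftPos (Matrix.det (Matrix.of fun i j : Fin (L+1) => hZ (b i + (j:ℕ))))) = 0 := by
    intro k hkK
    rw [hdet, hcoeff k, Finset.sum_eq_zero (fun i _ => by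
      rw [hZ_neg (by have := hbK i; omega), mul_zero, zero_mul]), mul_zero]
  have hsupp : Function.support (fun k : ℕ => hNeg k * PowerSeries.coeff (R := MvP) k
      (shiftPos (Matrix.det (Matrix.of fun i j : Fin (L+1) => hZ (b i + (j:ℕ))))))
      ⊆ (Finset.range (K+1) : Finset ℕ) := by
    intro k hk
    simp only [Function.mem_support] at hk
    simp only [Finset.coe_range, Set.mem_Iio]
    by_contra h
    exact hk (hzero k (by omega))
  rw [finsum_eq_sum_of_support_subset _ hsupp]
  rw [Finset.sum_congr rfl (fun k _ => by rw [hdet, hcoeff k, Finset.mul_sum])]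
  rw [Finset.sum_comm]
  refine Finset.sum_congr rfl fun i _ => ?_
  have hswap : ∑ k ∈ Finset.range (K+1), hNeg k * ((-1 : MvP)^(i:ℕ) * hZ (b i - k) *
      Matrix.det (Matrix.of fun i' j' : Fin L => hZ (b (i.succAbove i') + ((j':ℕ)+1)))) =
      (-1 : MvP)^(i:ℕ) * (∑ k ∈ Finset.range (K+1), hNeg k * hZ (b i - k)) *
      Matrix.det (Matrix.of fun i' j' : Fin L => hZ (b (i.succAbove i') + ((j':ℕ)+1))) := by
    rw [Finset.mul_sum, Finset.sum_mul]
    refine Finset.sum_congr rfl fun k _ => by ring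
  rw [hswap, convZ (b i) K (hbK i)]


theorem coe_list_eq (l : List ℕ) :
    (l.map (fun a => (a:ℤ))) = List.map (fun a : ℕ => (a:ℤ)) l := by
  induction l with
  | nil => rfl
  | cons a l ih => simpa using ih

theorem schur_det (l : List ℕ) (L : ℕ) (hl : l.length = L + 1) :
    schur l = Matrix.det (Matrix.of fun i j : Fin (L+1) =>
      hZ ((l.get (Fin.cast hl.symm i) : ℤ) - (i:ℕ) + (j:ℕ))) := by
  rw [schur, coe_list_eq, detM]
  have hlen : (List.map (fun a : ℕ => (a:ℤ)) l).length = L + 1 := by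
    rw [List.length_map]; exact hl
  refine det_congr_size hlen _ _ fun i j => ?_
  simp only [List.get_eq_getElem, List.getElem_map, Fin.coe_cast]

theorem frob_len (r : ℕ) (hr : 0 < r) (m n : Fin r → ℕ) :
    (frobToList r m n).length = n ⟨0, hr⟩ + 1 := by
  rw [frobToList, List.length_ofFn, dif_pos hr]

theorem frob_get (r : ℕ) (hr : 0 < r) (m n : Fin r → ℕ) (i : ℕ)
    (hi : i < (frobToList r m n).length) :
    (frobToList r m n).get ⟨i, hi⟩ =
    if h : i < r then m ⟨i, h⟩ + i + 1
    else ((Finset.univ : Finset (Fin r)).filter fun j => i + 1 ≤ n j + (j:ℕ) + 1).card := by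
  unfold frobToList
  rw [List.get_ofFn]
  rfl


/-- for `λ = (m₁,…,m_r|n₁,…,n_r)` with `n_r ≥ 1`,
`-res_{z=∞} s_λ(q+[z⁻¹]) e^{-∑ q_n zⁿ} dz/z = (-1)^r s_{(m₁+1,…,m_r+1|n₁-1,…,n_r-1)}`, the
residue being the pairing `∑_k h_k(-q) · (coefficient of z^{-k} in s_λ(q+[z⁻¹]))`; if
`n_r = 0` the left-hand side vanishes. -/
theorem statement18 (r : ℕ) (hr : 1 ≤ r) (m n : Fin r → ℕ)
    (hm : StrictAnti m) (hn : StrictAnti n) :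
    (1 ≤ n ⟨r - 1, by omega⟩ →
      (∑ᶠ k : ℕ, hNeg k * PowerSeries.coeff (R := MvP) k (shiftPos (schur (frobToList r m n)))) =
        (-1 : MvP) ^ r * schur (frobToList r (fun i => m i + 1) (fun i => n i - 1))) ∧
    (n ⟨r - 1, by omega⟩ = 0 →
      (∑ᶠ k : ℕ, hNeg k * PowerSeries.coeff (R := MvP) k (shiftPos (schur (frobToList r m n)))) = 0) := by
  have h0r : 0 < r := hr
  have hR1 : r - 1 < r := by omega
  -- quantitative strict antitonicity
  have anti' : ∀ (d : ℕ) (j k : Fin r), (k:ℕ) = (j:ℕ) + d → n k + d ≤ n j := by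
    intro d
    induction d with
    | zero =>
      intro j k h
      have : j = k := Fin.ext (by omega)
      subst this
      omega
    | succ d ih =>
      intro j k h
      have hk' : (j:ℕ) + d < r := by have := k.isLt; omega
      have h1 := ih j ⟨(j:ℕ)+d, hk'⟩ rfl
      have h2 : n k < n ⟨(j:ℕ)+d, hk'⟩ := hn (by rw [Fin.lt_def]; simp; omega)
      omega
  have hmin : ∀ (j : Fin r), n ⟨r-1, hR1⟩ + (r-1) ≤ n j + (j:ℕ) := by
    intro j
    have hj : (j:ℕ) ≤ r - 1 := by have := j.isLt; omega
    have := anti' ((r-1) - (j:ℕ)) j ⟨r-1, hR1⟩ (by simp; omega)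
    omega
  -- total versions of m and the filter cardinalities
  set M : ℕ → ℕ := fun x => if hx : x < r then m ⟨x, hx⟩ else 0 with hM
  set F : ℕ → ℕ := fun x => ((Finset.univ : Finset (Fin r)).filter
    fun j => x + 1 ≤ n j + (j:ℕ) + 1).card with hF
  set F' : ℕ → ℕ := fun x => ((Finset.univ : Finset (Fin r)).filter
    fun j => x + 1 ≤ (n j - 1) + (j:ℕ) + 1).card with hF'
  set N0 := n ⟨0, h0r⟩ with hN0def
  have hlen : (frobToList r m n).length = N0 + 1 := frob_len r h0r m n
  set b : Fin (N0+1) → ℤ :=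
    fun i => ((frobToList r m n).get (Fin.cast hlen.symm i) : ℤ) - (i:ℕ) with hb
  have hschur : schur (frobToList r m n) =
      Matrix.det (Matrix.of fun i j : Fin (N0+1) => hZ (b i + (j:ℕ))) := by
    rw [schur_det (frobToList r m n) N0 hlen]
  -- values of b
  have hbval : ∀ (i : Fin (N0+1)), b i =
      (if (i:ℕ) < r then (M (i:ℕ) : ℤ) + (i:ℕ) + 1 else (F (i:ℕ) : ℤ)) - (i:ℕ) := by
    intro i
    have hix : (i:ℕ) < (frobToList r m n).length := by omega
    have hcast : Fin.cast hlen.symm i = ⟨(i:ℕ), hix⟩ := by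
      apply Fin.ext
      simp
    show ((frobToList r m n).get (Fin.cast hlen.symm i) : ℤ) - ((i:ℕ):ℤ) = _
    rw [hcast, frob_get r h0r m n (i:ℕ) hix]
    split_ifs with h
    · rw [show M (i:ℕ) = m ⟨(i:ℕ), h⟩ from by rw [hM]; exact dif_pos h]
      push_cast
      ring
    · rfl
  have hcard_le : ∀ (x : ℕ), F x ≤ r := by
    intro x
    rw [hF]
    calc _ ≤ (Finset.univ : Finset (Fin r)).card := Finset.card_filter_le _ _
    _ = r := by simp
  -- indicator analysis
  have hind : ∀ (i : Fin (N0+1)), b i = 0 ↔ ((i:ℕ) = r ∧ 1 ≤ n ⟨r-1, hR1⟩) := by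
    intro i
    rw [hbval i]
    rcases lt_trichotomy (i:ℕ) r with hlt | heq | hgt
    · rw [if_pos hlt]
      constructor
      · intro hcontra
        exfalso
        omega
      · rintro ⟨h1, _⟩
        omega
    · rw [if_neg (by omega)]
      constructor
      · intro hzero
        refine ⟨heq, ?_⟩
        by_contra hcon
        push_neg at hcon
        have hnr : n ⟨r-1, hR1⟩ = 0 := by omega
        have hnotmem : (⟨r-1, hR1⟩ : Fin r) ∉ (Finset.univ : Finset (Fin r)).filter
            (fun j => (i:ℕ) + 1 ≤ n j + (j:ℕ) + 1) := by
          simp only [Finset.mem_filter, Finset.mem_univ, true_and, not_le]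
          simp only [hnr]
          omega
        have hsub : ((Finset.univ : Finset (Fin r)).filter
            (fun j => (i:ℕ) + 1 ≤ n j + (j:ℕ) + 1)) ⊆ Finset.univ.erase ⟨r-1, hR1⟩ := by
          intro x hx
          rw [Finset.mem_erase]
          exact ⟨fun hxx => hnotmem (hxx ▸ hx), Finset.mem_univ x⟩
        have hcard : F (i:ℕ) ≤ r - 1 := by
          rw [hF]
          calc _ ≤ (Finset.univ.erase (⟨r-1, hR1⟩ : Fin r)).card := Finset.card_le_card hsub
          _ = r - 1 := by rw [Finset.card_erase_of_mem (Finset.mem_univ _)]; simp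
        omega
      · rintro ⟨_, h1⟩
        have hfull : ((Finset.univ : Finset (Fin r)).filter
            (fun j => (i:ℕ) + 1 ≤ n j + (j:ℕ) + 1)) = Finset.univ := by
          refine Finset.filter_true_of_mem fun j _ => ?_
          have := hmin j
          omega
        have : F (i:ℕ) = r := by
          rw [hF]
          show (Finset.filter _ _).card = r
          rw [hfull]
          simp
        omega
    · rw [if_neg (by omega)]
      constructor
      · intro hzero
        exfalso
        have := hcard_le (i:ℕ)
        omega
      · rintro ⟨h1, _⟩
        omega
  constructor
  · -- case n_{r-1} ≥ 1
    intro hn1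
    have hrN0 : r ≤ N0 := by
      have := hmin ⟨0, h0r⟩
      simp at this
      omega
    have hFF' : ∀ x : ℕ, F' x = F (x+1) := by
      intro x
      rw [hF', hF]
      show (Finset.filter _ _).card = (Finset.filter _ _).card
      congr 1
      refine Finset.filter_congr fun j _ => ?_
      have h1 := hmin j
      have h2 : 1 ≤ n j := by have := j.isLt; omega
      constructor <;> intro <;> omega
    rw [hschur, main_calc N0 b]
    set R : Fin (N0+1) := ⟨r, by omega⟩ with hRdef
    rw [Finset.sum_eq_single R]
    · rw [if_pos ((hind R).mpr ⟨rfl, hn1⟩), mul_one]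
      have hμlen : (frobToList r (fun i => m i + 1) (fun i => n i - 1)).length
          = (N0 - 1) + 1 := by
        rw [frob_len r h0r]
      have hN0eq : N0 = (N0 - 1) + 1 := by omega
      rw [schur_det _ (N0-1) hμlen]
      congr 1
      refine det_congr_size hN0eq _ _ fun i' j' => ?_
      -- entry computation
      have hsucc : ((R.succAbove i') : ℕ) = if (i':ℕ) < r then (i':ℕ) else (i':ℕ) + 1 := by
        rw [Fin.succAbove]
        split_ifs with h1 h2 h3
        · rfl
        · exfalso
          rw [Fin.lt_def] at h1
          simp [hRdef] at h1
          omega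
        · exfalso
          rw [Fin.lt_def] at h1
          simp [hRdef] at h1
          omega
        · rfl
      have hμx : ((Fin.cast hN0eq i') : ℕ) < (frobToList r (fun i => m i + 1)
          (fun i => n i - 1)).length := by
        rw [hμlen]
        simp only [Fin.coe_cast]
        omega
      have hcast2 : (Fin.cast hμlen.symm (Fin.cast hN0eq i')) =
          (⟨(i':ℕ), by simpa using hμx⟩ : Fin ((frobToList r (fun i => m i + 1)
            (fun i => n i - 1)).length)) := by
        apply Fin.ext
        simp
      have hμget : (frobToList r (fun i => m i + 1) (fun i => n i - 1)).get
          ⟨(i':ℕ), by simpa using hμx⟩ =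
          if (i':ℕ) < r then (M (i':ℕ) + 1) + (i':ℕ) + 1 else F' (i':ℕ) := by
        rw [frob_get r h0r _ _ (i':ℕ) (by simpa using hμx)]
        split_ifs with h
        · rw [show M (i':ℕ) = m ⟨(i':ℕ), h⟩ from by rw [hM]; exact dif_pos h]
        · rfl
      rw [hcast2, hμget]
      simp only [Fin.coe_cast]
      congr 1
      rw [hbval (R.succAbove i'), hsucc]
      rcases lt_or_ge ((i':ℕ)) r with hi' | hi'
      · simp only [if_pos hi']
        push_cast
        ring
      · simp only [if_neg (not_lt.mpr hi')]
        rw [if_neg (by omega), hFF' (i':ℕ)]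
        push_cast
        ring
    · intro i _ hne
      rw [if_neg (fun hc => hne (Fin.ext (((hind i).mp hc).1)))]
      ring
    · intro h
      exact absurd (Finset.mem_univ _) h
  · -- case n_{r-1} = 0
    intro hn0
    rw [hschur, main_calc N0 b]
    refine Finset.sum_eq_zero fun i _ => ?_
    rw [if_neg (fun hc => by have := ((hind i).mp hc).2; omega)]
    ring


end
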